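/- For the subdivision operator SD_n with weight (a,b), on the level of homology classes one has [a·SD_n(u)] = [b·u] and [b·SD_n(u)] = [a·u] for every cycle u ∈ ker ∂_n, n ≥ 0. -/

import Mathlib

open scoped BigOperators

noncomputable section

/-- The `n`-dimensional unit cube. -/
abbrev Cube (n : ℕ) : Type := Fin n → unitInterval

/-- The point `i/L` of the unit interval, for `i ∈ {0,…,L}`. -/
def vertexVal (L : ℕ) (i : Fin (L + 1)) : unitInterval :=
  ⟨(i : ℝ) / L, ⟨by positivity,
    div_le_one_of_le₀ (by exact_mod_cast Fin.is_le i) (Nat.cast_nonneg L)⟩⟩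

/-- Insertion of the constant `c` at the `j`-th coordinate. -/
def faceMap {n : ℕ} (j : Fin (n + 1)) (c : unitInterval) : C(Cube n, Cube (n + 1)) :=
  ⟨fun x => j.insertNth c x, (continuous_const : Continuous fun _ : Cube n => c).finInsertNth j continuous_id⟩

/-- The face `⟨T⟩_{n,·,j}` of a singular cube at value `c` in direction `j`. -/
def face {X : Type} [TopologicalSpace X] {n : ℕ} (T : C(Cube (n + 1), X)) (j : Fin (n + 1))
    (c : unitInterval) : C(Cube n, X) :=
  T.comp (faceMap j c)

/-- The module of cubical `n`-chains: the free `R`-module on the continuous maps `Iⁿ → X`. -/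
abbrev Kmod (R : Type) [CommRing R] (X : Type) [TopologicalSpace X] (n : ℕ) : Type :=
  C(Cube n, X) →₀ R

/-- The weighted boundary operator. -/
def bdry (R : Type) [CommRing R] {L : ℕ} (m : Fin (L + 1) → R) (X : Type) [TopologicalSpace X]
    (n : ℕ) : Kmod R X (n + 1) →ₗ[R] Kmod R X n :=
  Finsupp.lift (Kmod R X n) R C(Cube (n + 1), X) fun T =>
    ∑ j : Fin (n + 1), ∑ i : Fin (L + 1),
      ((-1 : R) ^ (j : ℕ) * m i) • Finsupp.single (face T j (vertexVal L i)) (1 : R)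


/-- The three coordinate patterns `(e,v) ∈ {(0,1), (2,1), (2,-1)}` occurring in the
subdivision (pairs with `e ∈ E = {0,2}`, `v ∈ V = {-1,1}`, and `v = 1` whenever `e = 0`). -/
def evE : Fin 3 → ℕ := ![0, 2, 2]

def evV : Fin 3 → ℤ := ![1, 1, -1]

/-- The affine contraction `x ↦ (e + v·x)/3` of the cube into itself, one pattern per
coordinate; this realizes `‖T‖_{1/3,e,v}` as `T ∘ subCubeMap z`. -/
def subCubeMap {n : ℕ} (z : Fin n → Fin 3) : C(Cube n, Cube n) :=
  ⟨fun x i => Set.projIcc (0 : ℝ) 1 zero_le_one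
      (((evE (z i) : ℝ) + (evV (z i) : ℝ) * (x i : ℝ)) / 3), by
    refine continuous_pi fun i => continuous_projIcc.comp ?_
    exact ((continuous_const.add (continuous_const.mul
      (continuous_subtype_val.comp (continuous_apply i)))).div_const 3)⟩

/-- The subdivision operator
`SD_n(T) = Σ_{e∈Eⁿ} Σ_{v∈V_{e,n}} (−Π v_i) · ‖T‖_{1/3,e,v}`
(indexed here by `z : Fin n → Fin 3` enumerating the admissible pairs `(e,v)`). -/
def SD (R : Type) [CommRing R] (X : Type) [TopologicalSpace X] (n : ℕ) :
    Kmod R X n →ₗ[R] Kmod R X n :=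
  Finsupp.lift (Kmod R X n) R C(Cube n, X) fun T =>
    ∑ z : Fin n → Fin 3,
      ((-(∏ i, evV (z i)) : ℤ) : R) • Finsupp.single (T.comp (subCubeMap z)) (1 : R)

/-- Cycles: kernel of the boundary operator (everything in degree `0`). -/
def cyclesMod (R : Type) [CommRing R] {L : ℕ} (m : Fin (L + 1) → R) (X : Type)
    [TopologicalSpace X] : (n : ℕ) → Submodule R (Kmod R X n)
  | 0 => ⊤
  | (k + 1) => LinearMap.ker (bdry R m X k)


/-! ### Auxiliary machinery -/

namespace SDAux

set_option linter.unusedSectionVars false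
set_option maxHeartbeats 1000000

variable {R : Type} [CommRing R] {X Y Z W : Type} [TopologicalSpace X] [TopologicalSpace Y]
  [TopologicalSpace Z] [TopologicalSpace W]

lemma klift_single {M : Type} [AddCommGroup M] [Module R M] {α : Type} (f : α → M) (x : α)
    (r : R) : Finsupp.lift M R α f (Finsupp.single x r) = r • f x := by
  rw [Finsupp.lift_apply, Finsupp.sum_single_index]
  simp

/-- Pushforward of chains along a continuous map. -/
def mapK (f : C(X, Y)) {n : ℕ} : Kmod R X n →ₗ[R] Kmod R Y n :=
  Finsupp.lift _ R _ fun g => Finsupp.single (f.comp g) 1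

@[simp] lemma mapK_single (f : C(X, Y)) {n : ℕ} (g : C(Cube n, X)) (r : R) :
    mapK f (Finsupp.single g r) = Finsupp.single (f.comp g) r := by
  rw [mapK, klift_single, Finsupp.smul_single, smul_eq_mul, mul_one]

lemma mapK_mapK (f : C(Y, Z)) (g : C(X, Y)) {n : ℕ} (c : Kmod R X n) :
    mapK f (mapK g c) = mapK (f.comp g) c := by
  induction c using Finsupp.induction_linear with
  | zero => simp
  | add a b ha hb => simp [ha, hb]
  | single T r => simp [ContinuousMap.comp_assoc]

@[simp] lemma mapK_id {n : ℕ} (c : Kmod R X n) : mapK (ContinuousMap.id X) c = c := by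
  induction c using Finsupp.induction_linear with
  | zero => simp
  | add a b ha hb => simp [ha, hb]
  | single T r => simp

/-- Operator attached to a universal chain: `app θ` precomposes with the cubes of `θ`. -/
def app {p q : ℕ} (θ : Kmod R (Cube p) q) : Kmod R X p →ₗ[R] Kmod R X q :=
  Finsupp.lift _ R _ fun T => mapK T θ

@[simp] lemma app_single {p q : ℕ} (θ : Kmod R (Cube p) q) (T : C(Cube p, X)) (r : R) :
    app θ (Finsupp.single T r) = r • mapK T θ :=
  klift_single _ _ _

lemma app_zero_chain {p q : ℕ} (u : Kmod R X p) : app (0 : Kmod R (Cube p) q) u = 0 := by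
  induction u using Finsupp.induction_linear with
  | zero => simp
  | add a b ha hb => simp [ha, hb]
  | single T r => simp

lemma app_add_chain {p q : ℕ} (θ₁ θ₂ : Kmod R (Cube p) q) (u : Kmod R X p) :
    app (θ₁ + θ₂) u = app θ₁ u + app θ₂ u := by
  induction u using Finsupp.induction_linear with
  | zero => simp
  | add a b ha hb => simp only [map_add, ha, hb]; abel
  | single T r => simp [smul_add]

lemma app_smul_chain {p q : ℕ} (r : R) (θ : Kmod R (Cube p) q) (u : Kmod R X p) :
    app (r • θ) u = r • app θ u := by
  induction u using Finsupp.induction_linear with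
  | zero => simp
  | add a b ha hb => simp only [map_add, ha, hb, smul_add]
  | single T s => simp [smul_comm s r]

lemma app_neg_chain {p q : ℕ} (θ : Kmod R (Cube p) q) (u : Kmod R X p) :
    app (-θ) u = - app θ u := by
  have := app_smul_chain (R := R) (X := X) (-1 : R) θ u
  simpa using this

lemma app_sub_chain {p q : ℕ} (θ₁ θ₂ : Kmod R (Cube p) q) (u : Kmod R X p) :
    app (θ₁ - θ₂) u = app θ₁ u - app θ₂ u := by
  rw [sub_eq_add_neg, app_add_chain, app_neg_chain, sub_eq_add_neg]

lemma app_mapK {p q : ℕ} (θ : Kmod R (Cube p) q) (f : C(X, Y)) (c : Kmod R X p) :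
    app θ (mapK f c) = mapK f (app θ c) := by
  induction c using Finsupp.induction_linear with
  | zero => simp
  | add a b ha hb => simp [ha, hb]
  | single T r => simp [mapK_mapK]

lemma app_app {s p q : ℕ} (θ : Kmod R (Cube p) q) (c : Kmod R (Cube s) p) (u : Kmod R X s) :
    app θ (app c u) = app (app θ c) u := by
  induction u using Finsupp.induction_linear with
  | zero => simp
  | add a b ha hb => simp [ha, hb]
  | single T r => simp [app_mapK]

/-- The fundamental class of the cube. -/
def iota (n : ℕ) : Kmod R (Cube n) n := Finsupp.single (ContinuousMap.id _) 1

@[simp] lemma app_iota_right {p q : ℕ} (θ : Kmod R (Cube p) q) :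
    app θ (iota p (R := R)) = θ := by
  rw [iota, app_single, one_smul, mapK_id]

@[simp] lemma app_iota_left {p : ℕ} (u : Kmod R X p) : app (iota p (R := R)) u = u := by
  induction u using Finsupp.induction_linear with
  | zero => simp
  | add a b ha hb => simp [ha, hb]
  | single T r => simp [iota]


section Nat

variable {L : ℕ} (w : Fin (L + 1) → R)

lemma bdry_single (n : ℕ) (T : C(Cube (n + 1), X)) (r : R) :
    bdry R w X n (Finsupp.single T r)
      = r • ∑ j : Fin (n + 1), ∑ i : Fin (L + 1),
          ((-1 : R) ^ (j : ℕ) * w i) • Finsupp.single (face T j (vertexVal L i)) (1 : R) :=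
  klift_single _ _ _

lemma face_comp (f : C(X, Y)) {n : ℕ} (T : C(Cube (n + 1), X)) (j : Fin (n + 1))
    (c : unitInterval) : face (f.comp T) j c = f.comp (face T j c) :=
  ContinuousMap.comp_assoc _ _ _

lemma bdry_mapK (f : C(X, Y)) (n : ℕ) (c : Kmod R X (n + 1)) :
    bdry R w Y n (mapK f c) = mapK f (bdry R w X n c) := by
  induction c using Finsupp.induction_linear with
  | zero => simp
  | add a b ha hb => simp [ha, hb]
  | single T r =>
      rw [mapK_single, bdry_single, bdry_single, map_smul, map_sum]
      congr 1
      refine Finset.sum_congr rfl fun j _ => ?_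
      rw [map_sum]
      refine Finset.sum_congr rfl fun i _ => ?_
      rw [map_smul, mapK_single, face_comp]

lemma SD_single (n : ℕ) (T : C(Cube n, X)) (r : R) :
    SD R X n (Finsupp.single T r)
      = r • ∑ z : Fin n → Fin 3,
          ((-(∏ i, evV (z i)) : ℤ) : R) • Finsupp.single (T.comp (subCubeMap z)) (1 : R) :=
  klift_single _ _ _

lemma SD_mapK (f : C(X, Y)) (n : ℕ) (c : Kmod R X n) :
    SD R Y n (mapK f c) = mapK f (SD R X n c) := by
  induction c using Finsupp.induction_linear with
  | zero => simp
  | add a b ha hb => simp [ha, hb]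
  | single T r =>
      rw [mapK_single, SD_single, SD_single, map_smul, map_sum]
      congr 1
      refine Finset.sum_congr rfl fun z _ => ?_
      rw [map_smul, mapK_single, ContinuousMap.comp_assoc]

lemma bdry_app {p q : ℕ} (θ : Kmod R (Cube p) (q + 1)) (u : Kmod R X p) :
    bdry R w X q (app θ u) = app (bdry R w (Cube p) q θ) u := by
  induction u using Finsupp.induction_linear with
  | zero => simp
  | add a b ha hb => simp [ha, hb]
  | single T r => simp [bdry_mapK]

lemma SD_app {p q : ℕ} (θ : Kmod R (Cube p) q) (u : Kmod R X p) :
    SD R X q (app θ u) = app (SD R (Cube p) q θ) u := by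
  induction u using Finsupp.induction_linear with
  | zero => simp
  | add a b ha hb => simp [ha, hb]
  | single T r => simp [SD_mapK]

lemma app_sd_iota {n : ℕ} (u : Kmod R X n) :
    app (SD R (Cube n) n (iota n)) u = SD R X n u := by
  rw [← SD_app, app_iota_left]

lemma app_bdry_iota {n : ℕ} (u : Kmod R X (n + 1)) :
    app (bdry R w (Cube (n + 1)) n (iota (n + 1))) u = bdry R w X n u := by
  rw [← bdry_app, app_iota_left]

end Nat


/-! ### The basic continuous maps -/

section Maps

lemma cons_comp_succ {k : ℕ} (c : unitInterval) (x : Cube k) :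
    (Fin.cons c x : Cube (k + 1)) ∘ Fin.succ = x := by
  funext i; simp [Fin.cons_succ]

lemma insertNth_zero' {k : ℕ} (c : unitInterval) (x : Cube k) :
    (Fin.insertNth 0 c x : Cube (k + 1)) = (Fin.cons c x : Cube (k + 1)) := by
  simp [Fin.insertNth_zero]

lemma insertNth_succ' {k : ℕ} (j : Fin (k + 1)) (c : unitInterval) (x : Cube (k + 1)) :
    (Fin.insertNth j.succ c x : Cube (k + 2))
      = (Fin.cons (x 0) (Fin.insertNth j c (x ∘ Fin.succ)) : Cube (k + 2)) := by
  funext i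
  induction i using Fin.cases with
  | zero =>
      rw [show (0 : Fin (k + 2)) = j.succ.succAbove 0 from (Fin.succ_succAbove_zero j).symm,
        Fin.insertNth_apply_succAbove]
      rw [Fin.succ_succAbove_zero j, Fin.cons_zero]
  | succ i =>
      rw [Fin.cons_succ]
      induction i using Fin.succAboveCases (i := j) with
      | x => rw [Fin.insertNth_apply_same, Fin.insertNth_apply_same]
      | p l =>
          rw [← Fin.succ_succAbove_succ, Fin.insertNth_apply_succAbove,
            Fin.insertNth_apply_succAbove]
          rfl

/-- Drop the first coordinate. -/
def pi0 {n : ℕ} : C(Cube (n + 1), Cube n) :=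
  ⟨fun x => x ∘ Fin.succ, continuous_pi fun i => continuous_apply i.succ⟩

/-- Prepend an `I`-valued function to a cube-valued function. -/
def consMap {m n : ℕ} (A : C(Cube m, unitInterval)) (G : C(Cube m, Cube n)) :
    C(Cube m, Cube (n + 1)) :=
  ⟨fun x => Fin.cons (A x) (G x), by
    refine continuous_pi fun i => ?_
    induction i using Fin.cases with
    | zero => simpa only [Fin.cons_zero] using A.continuous
    | succ i =>
        simp only [Fin.cons_succ]
        exact (continuous_apply i).comp G.continuous⟩

@[simp] lemma consMap_apply {m n : ℕ} (A : C(Cube m, unitInterval)) (G : C(Cube m, Cube n))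
    (x : Cube m) : consMap A G x = Fin.cons (A x) (G x) := rfl

/-- `id × g`. -/
def prodL {m n : ℕ} (g : C(Cube m, Cube n)) : C(Cube (m + 1), Cube (n + 1)) :=
  consMap ⟨fun x => x 0, continuous_apply 0⟩ (g.comp pi0)

lemma prodL_apply {m n : ℕ} (g : C(Cube m, Cube n)) (x : Cube (m + 1)) :
    prodL g x = Fin.cons (x 0) (g (x ∘ Fin.succ)) := rfl

lemma faceMap_apply {k : ℕ} (j : Fin (k + 1)) (c : unitInterval) (x : Cube k) :
    faceMap j c x = Fin.insertNth j c x := rfl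

lemma Pa {m n : ℕ} (g : C(Cube m, Cube n)) (c : unitInterval) :
    (prodL g).comp (faceMap 0 c) = (faceMap 0 c).comp g := by
  refine ContinuousMap.ext fun x => ?_
  show prodL g (Fin.insertNth 0 c x) = Fin.insertNth 0 c (g x)
  rw [insertNth_zero', insertNth_zero' (x := g x), prodL_apply, Fin.cons_zero, cons_comp_succ]

lemma Pb {m n : ℕ} (g : C(Cube (m + 1), Cube n)) (j : Fin (m + 1)) (c : unitInterval) :
    (prodL g).comp (faceMap j.succ c) = prodL (g.comp (faceMap j c)) := by
  refine ContinuousMap.ext fun x => ?_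
  show prodL g (Fin.insertNth j.succ c x) = Fin.cons (x 0) (g (Fin.insertNth j c (x ∘ Fin.succ)))
  rw [insertNth_succ', prodL_apply, Fin.cons_zero, cons_comp_succ]

lemma Pc {m n p : ℕ} (f : C(Cube n, Cube p)) (g : C(Cube m, Cube n)) :
    prodL (f.comp g) = (prodL f).comp (prodL g) := by
  refine ContinuousMap.ext fun x => ?_
  show Fin.cons (x 0) (f (g (x ∘ Fin.succ))) = prodL f (Fin.cons (x 0) (g (x ∘ Fin.succ)))
  rw [prodL_apply, Fin.cons_zero, cons_comp_succ]

lemma Pd {m : ℕ} : prodL (ContinuousMap.id (Cube m)) = ContinuousMap.id (Cube (m + 1)) := by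
  refine ContinuousMap.ext fun x => ?_
  show Fin.cons (x 0) (x ∘ Fin.succ) = x
  exact Fin.cons_self_tail x

lemma Pe {m : ℕ} (j : Fin (m + 1)) (c : unitInterval) :
    prodL (faceMap j c) = faceMap j.succ c := by
  refine ContinuousMap.ext fun x => ?_
  exact (insertNth_succ' j c x).symm

lemma Qa {m : ℕ} (c : unitInterval) :
    (pi0 (n := m)).comp (faceMap 0 c) = ContinuousMap.id (Cube m) := by
  refine ContinuousMap.ext fun x => ?_
  show (Fin.insertNth 0 c x : Cube (m + 1)) ∘ Fin.succ = x
  rw [insertNth_zero', cons_comp_succ]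

lemma Qb {m : ℕ} (j : Fin (m + 1)) (c : unitInterval) :
    (pi0 (n := m + 1)).comp (faceMap j.succ c) = (faceMap j c).comp pi0 := by
  refine ContinuousMap.ext fun x => ?_
  show (Fin.insertNth j.succ c x : Cube (m + 2)) ∘ Fin.succ
      = Fin.insertNth j c (x ∘ Fin.succ)
  rw [insertNth_succ', cons_comp_succ]


lemma insertNth_one' {k : ℕ} (c : unitInterval) (x : Cube (k + 1)) :
    (Fin.insertNth (1 : Fin (k + 2)) c x : Cube (k + 2))
      = (Fin.cons (x 0) (Fin.cons c (x ∘ Fin.succ)) : Cube (k + 2)) := by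
  rw [show (1 : Fin (k + 2)) = (0 : Fin (k + 1)).succ from rfl, insertNth_succ', insertNth_zero']

/-- endpoints of the interval as `vertexVal`s -/
abbrev ep0 : unitInterval := vertexVal 1 0
abbrev ep1 : unitInterval := vertexVal 1 1

lemma vv0 : ((ep0 : unitInterval) : ℝ) = 0 := by simp [vertexVal]
lemma vv1 : ((ep1 : unitInterval) : ℝ) = 1 := by simp [vertexVal]

/-- Subdivision pattern applied at the first coordinate. -/
def oneC {n : ℕ} (p : Fin 3) : C(Cube (n + 1), Cube (n + 1)) :=
  consMap ⟨fun x => Set.projIcc (0 : ℝ) 1 zero_le_one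
      (((evE p : ℝ) + (evV p : ℝ) * (x 0 : ℝ)) / 3), by
    exact continuous_projIcc.comp ((continuous_const.add (continuous_const.mul
      (continuous_subtype_val.comp (continuous_apply 0)))).div_const 3)⟩ pi0

/-- The diagonal edge `s ↦ (1+2s)/3` in the first coordinate. -/
def Dmap {n : ℕ} : C(Cube (n + 1), Cube (n + 1)) :=
  consMap ⟨fun x => Set.projIcc (0 : ℝ) 1 zero_le_one ((1 + 2 * (x 0 : ℝ)) / 3), by
    exact continuous_projIcc.comp ((continuous_const.add (continuous_const.mul
      (continuous_subtype_val.comp (continuous_apply 0)))).div_const 3)⟩ pi0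

/-- First homotopy square `ψ₁(s,t) = t(1+2s)/3`, `s = x₀`, `t = x₁`. -/
def Psi1 {n : ℕ} : C(Cube (n + 2), Cube (n + 1)) :=
  consMap ⟨fun x => Set.projIcc (0 : ℝ) 1 zero_le_one
      (((x 1 : ℝ) * (1 + 2 * (x 0 : ℝ))) / 3), by
    exact continuous_projIcc.comp (((continuous_subtype_val.comp (continuous_apply 1)).mul
      (continuous_const.add (continuous_const.mul
        (continuous_subtype_val.comp (continuous_apply 0))))).div_const 3)⟩
    (pi0.comp pi0)

/-- Second homotopy square `ψ₂(s,t) = (2 + s - t + st)/3`. -/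
def Psi2 {n : ℕ} : C(Cube (n + 2), Cube (n + 1)) :=
  consMap ⟨fun x => Set.projIcc (0 : ℝ) 1 zero_le_one
      ((2 + (x 0 : ℝ) - (x 1 : ℝ) + (x 0 : ℝ) * (x 1 : ℝ)) / 3), by
    exact continuous_projIcc.comp ((((continuous_const.add
      (continuous_subtype_val.comp (continuous_apply 0))).sub
      (continuous_subtype_val.comp (continuous_apply 1))).add
      ((continuous_subtype_val.comp (continuous_apply 0)).mul
        (continuous_subtype_val.comp (continuous_apply 1)))).div_const 3)⟩
    (pi0.comp pi0)

lemma pi0_apply {n : ℕ} (x : Cube (n + 1)) : pi0 x = x ∘ Fin.succ := rfl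

lemma O1 {n : ℕ} : (oneC (n := n) 0).comp (faceMap 0 ep0) = faceMap 0 ep0 := by
  refine ContinuousMap.ext fun x => ?_
  show oneC 0 (Fin.insertNth 0 ep0 x) = Fin.insertNth 0 ep0 x
  rw [insertNth_zero']
  funext i
  induction i using Fin.cases with
  | zero =>
      show Set.projIcc (0:ℝ) 1 zero_le_one
          (((evE 0 : ℝ) + (evV 0 : ℝ) * ((Fin.cons ep0 x : Cube (n+1)) 0 : ℝ)) / 3) = ep0
      rw [Fin.cons_zero]
      rw [show ((evE 0 : ℝ) + (evV 0 : ℝ) * ((ep0 : unitInterval) : ℝ)) / 3 = ((ep0 : unitInterval) : ℝ) by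
        rw [vv0]; simp [evE, evV]]
      exact Set.projIcc_val zero_le_one ep0
  | succ i =>
      show pi0 (Fin.cons ep0 x : Cube (n+1)) i = (Fin.cons ep0 x : Cube (n+1)) i.succ
      rfl


@[simp] lemma consMap_zero {m n : ℕ} (A : C(Cube m, unitInterval)) (G : C(Cube m, Cube n))
    (x : Cube m) : consMap A G x 0 = A x := rfl

@[simp] lemma consMap_succ {m n : ℕ} (A : C(Cube m, unitInterval)) (G : C(Cube m, Cube n))
    (x : Cube m) (i : Fin n) : consMap A G x i.succ = G x i := by
  show (Fin.cons (A x) (G x) : Cube (n + 1)) i.succ = G x i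
  rw [Fin.cons_succ]

lemma consMap_comp_succ {m n : ℕ} (A : C(Cube m, unitInterval)) (G : C(Cube m, Cube n))
    (x : Cube m) : (consMap A G x) ∘ Fin.succ = G x := by
  funext i; exact consMap_succ A G x i

lemma cons_one {k : ℕ} (a : unitInterval) (y : Cube (k + 1)) :
    (Fin.cons a y : Cube (k + 2)) 1 = y 0 := by
  rw [show (1 : Fin (k + 2)) = (0 : Fin (k + 1)).succ from rfl, Fin.cons_succ]

lemma O2 {n : ℕ} : (oneC (n := n) 2).comp (faceMap 0 ep0) = (oneC 1).comp (faceMap 0 ep0) := by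
  refine ContinuousMap.ext fun x => ?_
  show oneC 2 (Fin.insertNth 0 ep0 x) = oneC 1 (Fin.insertNth 0 ep0 x)
  rw [insertNth_zero']
  funext i
  induction i using Fin.cases with
  | zero =>
      simp only [oneC, consMap_zero, ContinuousMap.coe_mk, Fin.cons_zero]
      refine congrArg _ ?_
      rw [vv0]; simp [evE, evV]
  | succ i => simp [oneC]

lemma O3 {n : ℕ} : (oneC (n := n) 1).comp (faceMap 0 ep1) = faceMap 0 ep1 := by
  refine ContinuousMap.ext fun x => ?_
  show oneC 1 (Fin.insertNth 0 ep1 x) = Fin.insertNth 0 ep1 x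
  rw [insertNth_zero']
  funext i
  induction i using Fin.cases with
  | zero =>
      simp only [oneC, consMap_zero, ContinuousMap.coe_mk, Fin.cons_zero]
      rw [show ((evE 1 : ℝ) + (evV 1 : ℝ) * ((ep1 : unitInterval) : ℝ)) / 3
            = ((ep1 : unitInterval) : ℝ) by rw [vv1]; simp [evE, evV]; norm_num]
      exact Set.projIcc_val zero_le_one ep1
  | succ i =>
      simp only [oneC, consMap_succ, pi0_apply]
      exact congrFun (cons_comp_succ ep1 x) i

lemma O4 {n : ℕ} : (oneC (n := n) 0).comp (faceMap 0 ep1) = (oneC 2).comp (faceMap 0 ep1) := by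
  refine ContinuousMap.ext fun x => ?_
  show oneC 0 (Fin.insertNth 0 ep1 x) = oneC 2 (Fin.insertNth 0 ep1 x)
  rw [insertNth_zero']
  funext i
  induction i using Fin.cases with
  | zero =>
      simp only [oneC, consMap_zero, ContinuousMap.coe_mk, Fin.cons_zero]
      refine congrArg _ ?_
      rw [vv1]; simp [evE, evV]; norm_num
  | succ i => simp [oneC]

lemma O5 {n : ℕ} (p : Fin 3) (j : Fin (n + 1)) (c : unitInterval) :
    (oneC (n := n + 1) p).comp (faceMap j.succ c) = (faceMap j.succ c).comp (oneC p) := by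
  refine ContinuousMap.ext fun x => ?_
  show oneC p (Fin.insertNth j.succ c x) = Fin.insertNth j.succ c (oneC p x)
  rw [insertNth_succ', insertNth_succ' (x := oneC p x)]
  funext i
  induction i using Fin.cases with
  | zero =>
      simp only [oneC, consMap_zero, ContinuousMap.coe_mk, Fin.cons_zero]
  | succ i =>
      simp only [oneC, consMap_succ, Fin.cons_succ, pi0_apply]
      rw [consMap_comp_succ]
      rfl

lemma Sa {n : ℕ} (w' : Fin n → Fin 3) (p : Fin 3) :
    (prodL (subCubeMap w')).comp (oneC p) = subCubeMap (Fin.cons p w') := by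
  refine ContinuousMap.ext fun x => ?_
  show prodL (subCubeMap w') (oneC p x) = subCubeMap (Fin.cons p w') x
  funext i
  induction i using Fin.cases with
  | zero =>
      rw [prodL_apply, Fin.cons_zero]
      show oneC p x 0 = _
      simp only [oneC, consMap_zero, ContinuousMap.coe_mk]
      show _ = Set.projIcc (0:ℝ) 1 zero_le_one
        (((evE ((Fin.cons p w' : Fin (n+1) → Fin 3) 0) : ℝ)
          + (evV ((Fin.cons p w' : Fin (n+1) → Fin 3) 0) : ℝ) * (x 0 : ℝ)) / 3)
      rw [Fin.cons_zero]
  | succ i =>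
      rw [prodL_apply, Fin.cons_succ]
      show subCubeMap w' ((oneC p x) ∘ Fin.succ) i = _
      rw [show (oneC p x) ∘ Fin.succ = pi0 x from consMap_comp_succ _ _ x]
      show Set.projIcc (0:ℝ) 1 zero_le_one
          (((evE (w' i) : ℝ) + (evV (w' i) : ℝ) * ((pi0 x i : unitInterval) : ℝ)) / 3)
        = Set.projIcc (0:ℝ) 1 zero_le_one
          (((evE ((Fin.cons p w' : Fin (n+1) → Fin 3) i.succ) : ℝ)
            + (evV ((Fin.cons p w' : Fin (n+1) → Fin 3) i.succ) : ℝ) * (x i.succ : ℝ)) / 3)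
      rw [Fin.cons_succ]
      rfl

lemma H1 {n : ℕ} : (Psi1 (n := n)).comp (faceMap 0 ep0) = oneC 0 := by
  refine ContinuousMap.ext fun x => ?_
  show Psi1 (Fin.insertNth 0 ep0 x) = oneC 0 x
  rw [insertNth_zero']
  funext i
  induction i using Fin.cases with
  | zero =>
      simp only [Psi1, oneC, consMap_zero, ContinuousMap.coe_mk]
      rw [cons_one, Fin.cons_zero]
      refine congrArg _ ?_
      rw [vv0]; simp [evE, evV]
  | succ i =>
      simp only [Psi1, oneC, consMap_succ, ContinuousMap.comp_apply, pi0_apply]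
      rw [cons_comp_succ]

lemma H2 {n : ℕ} : (Psi1 (n := n)).comp (faceMap 0 ep1) = ContinuousMap.id _ := by
  refine ContinuousMap.ext fun x => ?_
  show Psi1 (Fin.insertNth 0 ep1 x) = x
  rw [insertNth_zero']
  funext i
  induction i using Fin.cases with
  | zero =>
      simp only [Psi1, consMap_zero, ContinuousMap.coe_mk]
      rw [cons_one, Fin.cons_zero]
      rw [show ((x 0 : ℝ) * (1 + 2 * ((ep1 : unitInterval) : ℝ))) / 3 = ((x 0 : unitInterval) : ℝ)
        by rw [vv1]; ring]
      exact Set.projIcc_val zero_le_one (x 0)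
  | succ i =>
      simp only [Psi1, consMap_succ, ContinuousMap.comp_apply, pi0_apply]
      rw [cons_comp_succ]
      rfl

lemma H3 {n : ℕ} : (Psi2 (n := n)).comp (faceMap 0 ep0) = oneC 2 := by
  refine ContinuousMap.ext fun x => ?_
  show Psi2 (Fin.insertNth 0 ep0 x) = oneC 2 x
  rw [insertNth_zero']
  funext i
  induction i using Fin.cases with
  | zero =>
      simp only [Psi2, oneC, consMap_zero, ContinuousMap.coe_mk]
      rw [cons_one, Fin.cons_zero]
      refine congrArg _ ?_
      rw [vv0]; simp [evE, evV]; ring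
  | succ i =>
      simp only [Psi2, oneC, consMap_succ, ContinuousMap.comp_apply, pi0_apply]
      rw [cons_comp_succ]

lemma H4 {n : ℕ} : (Psi2 (n := n)).comp (faceMap 0 ep1) = (faceMap 0 ep1).comp pi0 := by
  refine ContinuousMap.ext fun x => ?_
  show Psi2 (Fin.insertNth 0 ep1 x) = Fin.insertNth 0 ep1 (pi0 x)
  rw [insertNth_zero', insertNth_zero']
  funext i
  induction i using Fin.cases with
  | zero =>
      simp only [Psi2, consMap_zero, ContinuousMap.coe_mk, Fin.cons_zero]
      rw [cons_one]
      rw [show (2 + ((ep1 : unitInterval) : ℝ) - (x 0 : ℝ)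
            + ((ep1 : unitInterval) : ℝ) * (x 0 : ℝ)) / 3 = ((ep1 : unitInterval) : ℝ) by
        rw [vv1]; ring]
      exact Set.projIcc_val zero_le_one ep1
  | succ i =>
      simp only [Psi2, consMap_succ, ContinuousMap.comp_apply, pi0_apply, Fin.cons_succ]
      rw [cons_comp_succ]

lemma H5 {n : ℕ} : (Psi1 (n := n)).comp (faceMap 1 ep0) = (faceMap 0 ep0).comp pi0 := by
  refine ContinuousMap.ext fun x => ?_
  show Psi1 (Fin.insertNth 1 ep0 x) = Fin.insertNth 0 ep0 (pi0 x)
  rw [insertNth_one', insertNth_zero']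
  funext i
  induction i using Fin.cases with
  | zero =>
      simp only [Psi1, consMap_zero, ContinuousMap.coe_mk, Fin.cons_zero]
      rw [cons_one, Fin.cons_zero]
      rw [show (((ep0 : unitInterval) : ℝ) * (1 + 2 * (x 0 : ℝ))) / 3
            = ((ep0 : unitInterval) : ℝ) by rw [vv0]; ring]
      exact Set.projIcc_val zero_le_one ep0
  | succ i =>
      simp only [Psi1, consMap_succ, ContinuousMap.comp_apply, pi0_apply, Fin.cons_succ]
      rw [cons_comp_succ, cons_comp_succ]

lemma H6 {n : ℕ} : (Psi1 (n := n)).comp (faceMap 1 ep1) = Dmap := by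
  refine ContinuousMap.ext fun x => ?_
  show Psi1 (Fin.insertNth 1 ep1 x) = Dmap x
  rw [insertNth_one']
  funext i
  induction i using Fin.cases with
  | zero =>
      simp only [Psi1, Dmap, consMap_zero, ContinuousMap.coe_mk]
      rw [cons_one, Fin.cons_zero, Fin.cons_zero]
      refine congrArg _ ?_
      rw [vv1]; ring
  | succ i =>
      simp only [Psi1, Dmap, consMap_succ, ContinuousMap.comp_apply, pi0_apply]
      rw [cons_comp_succ, cons_comp_succ]

lemma H7 {n : ℕ} : (Psi2 (n := n)).comp (faceMap 1 ep0) = oneC 1 := by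
  refine ContinuousMap.ext fun x => ?_
  show Psi2 (Fin.insertNth 1 ep0 x) = oneC 1 x
  rw [insertNth_one']
  funext i
  induction i using Fin.cases with
  | zero =>
      simp only [Psi2, oneC, consMap_zero, ContinuousMap.coe_mk]
      rw [cons_one, Fin.cons_zero, Fin.cons_zero]
      refine congrArg _ ?_
      rw [vv0]; simp [evE, evV]
  | succ i =>
      simp only [Psi2, oneC, consMap_succ, ContinuousMap.comp_apply, pi0_apply]
      rw [cons_comp_succ, cons_comp_succ]

lemma H8 {n : ℕ} : (Psi2 (n := n)).comp (faceMap 1 ep1) = Dmap := by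
  refine ContinuousMap.ext fun x => ?_
  show Psi2 (Fin.insertNth 1 ep1 x) = Dmap x
  rw [insertNth_one']
  funext i
  induction i using Fin.cases with
  | zero =>
      simp only [Psi2, Dmap, consMap_zero, ContinuousMap.coe_mk]
      rw [cons_one, Fin.cons_zero, Fin.cons_zero]
      refine congrArg _ ?_
      rw [vv1]; ring
  | succ i =>
      simp only [Psi2, Dmap, consMap_succ, ContinuousMap.comp_apply, pi0_apply]
      rw [cons_comp_succ, cons_comp_succ]

lemma H9a {n : ℕ} (j : Fin (n + 1)) (c : unitInterval) :
    (Psi1 (n := n + 1)).comp (faceMap j.succ.succ c) = (faceMap j.succ c).comp (Psi1 (n := n)) := by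
  refine ContinuousMap.ext fun x => ?_
  show Psi1 (Fin.insertNth j.succ.succ c x) = Fin.insertNth j.succ c (Psi1 x)
  rw [insertNth_succ', insertNth_succ' (x := x ∘ Fin.succ), insertNth_succ' (x := Psi1 x)]
  funext i
  induction i using Fin.cases with
  | zero =>
      simp only [Psi1, consMap_zero, ContinuousMap.coe_mk, Fin.cons_zero]
      rw [cons_one]
      rfl
  | succ i =>
      simp only [Psi1, consMap_succ, ContinuousMap.comp_apply, pi0_apply, Fin.cons_succ]
      rw [cons_comp_succ, cons_comp_succ, consMap_comp_succ]
      rfl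

lemma H9b {n : ℕ} (j : Fin (n + 1)) (c : unitInterval) :
    (Psi2 (n := n + 1)).comp (faceMap j.succ.succ c) = (faceMap j.succ c).comp (Psi2 (n := n)) := by
  refine ContinuousMap.ext fun x => ?_
  show Psi2 (Fin.insertNth j.succ.succ c x) = Fin.insertNth j.succ c (Psi2 x)
  rw [insertNth_succ', insertNth_succ' (x := x ∘ Fin.succ), insertNth_succ' (x := Psi2 x)]
  funext i
  induction i using Fin.cases with
  | zero =>
      simp only [Psi2, consMap_zero, ContinuousMap.coe_mk, Fin.cons_zero]
      rw [cons_one]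
      rfl
  | succ i =>
      simp only [Psi2, consMap_succ, ContinuousMap.comp_apply, pi0_apply, Fin.cons_succ]
      rw [cons_comp_succ, cons_comp_succ, consMap_comp_succ]
      rfl

end Maps




/-! ### Universal chains and operators -/

section Ops

variable (a b : R)

lemma app_sum_chain {p q : ℕ} {α : Type*} (s : Finset α) (θ : α → Kmod R (Cube p) q)
    (u : Kmod R X p) : app (∑ x ∈ s, θ x) u = ∑ x ∈ s, app (θ x) u := by
  classical
  induction s using Finset.induction with
  | empty => simp [app_zero_chain]
  | insert x s hx ih => rw [Finset.sum_insert hx, Finset.sum_insert hx, app_add_chain, ih]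

/-- chain of the `0`-face operator in direction `0` -/
def fC (i : Fin 2) (n : ℕ) : Kmod R (Cube (n + 1)) n :=
  Finsupp.single (faceMap 0 (vertexVal 1 i)) 1

/-- chain of the degeneracy operator -/
def ddC (n : ℕ) : Kmod R (Cube n) (n + 1) := Finsupp.single pi0 1

/-- chain of the homotopy operator -/
def hC (n : ℕ) : Kmod R (Cube (n + 1)) (n + 2) :=
  Finsupp.single (Psi2 (n := n)) 1 - Finsupp.single (Psi1 (n := n)) 1

/-- chain of the first-coordinate subdivision operator -/
def vC (n : ℕ) : Kmod R (Cube (n + 1)) (n + 1) :=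
  Finsupp.single (oneC 0) 1 - Finsupp.single (oneC 2) 1 + Finsupp.single (oneC 1) 1

/-- chain of the subdivision operator -/
def sdC (n : ℕ) : Kmod R (Cube n) n := SD R (Cube n) n (iota n)

/-- universal chain of `tens` applied to the chain of the boundary -/
def tens {p q : ℕ} : Kmod R (Cube p) q →ₗ[R] Kmod R (Cube (p + 1)) (q + 1) :=
  Finsupp.lift _ R _ fun g => Finsupp.single (prodL g) 1

@[simp] lemma tens_single {p q : ℕ} (g : C(Cube q, Cube p)) (r : R) :
    tens (Finsupp.single g r) = Finsupp.single (prodL g) r := by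
  rw [tens, klift_single, Finsupp.smul_single, smul_eq_mul, mul_one]

/-- chain of `id ⊗ SD` -/
def eC (n : ℕ) : Kmod R (Cube (n + 1)) (n + 1) := tens (sdC n)

/-- the rest (`j ≥ 1`) of the boundary chain -/
def brC (n : ℕ) : Kmod R (Cube (n + 1)) n :=
  ∑ j : Fin n, ∑ i : Fin 2,
    ((-1 : R) ^ ((j : ℕ) + 1) * ![a, b] i) • Finsupp.single (faceMap j.succ (vertexVal 1 i)) 1

/-- the boundary chain -/
def bdC (n : ℕ) : Kmod R (Cube (n + 1)) n := bdry R ![a, b] (Cube (n + 1)) n (iota (n + 1))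

lemma wv0 : (![a, b] : Fin 2 → R) 0 = a := rfl
lemma wv1 : (![a, b] : Fin 2 → R) 1 = b := rfl

lemma vv0' : vertexVal 1 (0 : Fin 2) = ep0 := rfl
lemma vv1' : vertexVal 1 (1 : Fin 2) = ep1 := rfl

lemma face_id {n : ℕ} (j : Fin (n + 1)) (c : unitInterval) :
    face (ContinuousMap.id (Cube (n + 1))) j c = faceMap j c :=
  ContinuousMap.id_comp _

/-- C1 : splitting of the boundary chain -/
lemma C1 (n : ℕ) : bdC a b n = a • fC 0 n + b • fC 1 n + brC a b n := by
  rw [bdC, iota, bdry_single, one_smul, Fin.sum_univ_succ, Fin.sum_univ_two, brC]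
  simp only [Fin.val_zero, pow_zero, one_mul, wv0, wv1, fC, face_id, Fin.val_succ]

/-- the boundary as an operator applied to `bdC` -/
lemma bdry_eq_app (n : ℕ) (u : Kmod R X (n + 1)) :
    bdry R ![a, b] X n u = app (bdC a b n) u := by
  rw [bdC, ← bdry_app, app_iota_left]

lemma SD_eq_app (n : ℕ) (u : Kmod R X n) : SD R X n u = app (sdC n) u := by
  rw [sdC, ← SD_app, app_iota_left]

lemma app_mapK_chain {p q s : ℕ} (f : C(Cube s, Cube p)) (θ : Kmod R (Cube s) q)
    (u : Kmod R X p) : app (mapK f θ) u = app θ (app (Finsupp.single f (1 : R)) u) := by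
  induction u using Finsupp.induction_linear with
  | zero => simp
  | add c d hc hd => simp [hc, hd]
  | single T r =>
      rw [app_single, app_single, mapK_mapK, map_smul, mapK_single, app_single, one_smul]


lemma bdry_single_split0 (T : C(Cube 1, X)) :
    bdry R ![a, b] X 0 (Finsupp.single T (1 : R))
      = a • Finsupp.single (face T 0 ep0) (1 : R) + b • Finsupp.single (face T 0 ep1) (1 : R) := by
  rw [bdry_single, one_smul, Fin.sum_univ_one, Fin.sum_univ_two]
  simp only [Fin.val_zero, pow_zero, one_mul, wv0, wv1]

lemma bdry_single_split (k : ℕ) (T : C(Cube (k + 2), X)) :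
    bdry R ![a, b] X (k + 1) (Finsupp.single T (1 : R))
      = a • Finsupp.single (face T 0 ep0) (1 : R) + b • Finsupp.single (face T 0 ep1) (1 : R)
        + ∑ j : Fin (k + 1), ∑ i : Fin 2,
            ((-1 : R) ^ ((j : ℕ) + 1) * ![a, b] i)
              • Finsupp.single (face T j.succ (vertexVal 1 i)) (1 : R) := by
  rw [bdry_single, one_smul, Fin.sum_univ_succ, Fin.sum_univ_two]
  simp only [Fin.val_zero, pow_zero, one_mul, wv0, wv1, Fin.val_succ]

lemma brC_zero : brC a b 0 = 0 := by
  rw [brC]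
  exact Finset.sum_empty

/-- C2a : boundary of the degeneracy chain, base case -/
lemma C2a : bdry R ![a, b] (Cube 0) 0 (ddC 0) = (a + b) • iota 0 := by
  rw [ddC, bdry_single_split0]
  have h0 : face (pi0 : C(Cube 1, Cube 0)) 0 ep0 = ContinuousMap.id _ := Qa ep0
  have h1 : face (pi0 : C(Cube 1, Cube 0)) 0 ep1 = ContinuousMap.id _ := Qa ep1
  rw [h0, h1, iota, add_smul]

/-- C2b : boundary of the degeneracy chain -/
lemma C2b (k : ℕ) : bdry R ![a, b] (Cube (k + 1)) (k + 1) (ddC (k + 1))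
    = (a + b) • iota (k + 1) - app (ddC k) (bdC a b k) := by
  rw [ddC, bdry_single_split]
  have h0 : face (pi0 : C(Cube (k + 2), Cube (k + 1))) 0 ep0 = ContinuousMap.id _ := Qa ep0
  have h1 : face (pi0 : C(Cube (k + 2), Cube (k + 1))) 0 ep1 = ContinuousMap.id _ := Qa ep1
  rw [h0, h1, iota, add_smul, bdC, iota, bdry_single, one_smul, map_sum]
  rw [sub_eq_add_neg, ← Finset.sum_neg_distrib]
  congr 1
  refine Finset.sum_congr rfl fun j _ => ?_
  rw [map_sum, ← Finset.sum_neg_distrib]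
  refine Finset.sum_congr rfl fun i _ => ?_
  rw [map_smul, app_single, one_smul, ddC, mapK_single, ← neg_smul]
  have hface : face (pi0 : C(Cube (k + 2), Cube (k + 1))) j.succ (vertexVal 1 i)
      = (face (ContinuousMap.id (Cube (k + 1))) j (vertexVal 1 i)).comp pi0 := by
    rw [face_id]
    exact Qb j (vertexVal 1 i)
  rw [hface]
  congr 1
  ring

/-- C4a : boundary of the first-coordinate-subdivision chain, base case -/
lemma C4a : bdry R ![a, b] (Cube 1) 0 (vC 0) = a • fC 0 0 + b • fC 1 0 := by
  rw [vC, map_add, map_sub, bdry_single_split0, bdry_single_split0, bdry_single_split0]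
  have e1 : face (oneC (n := 0) 0) 0 ep0 = faceMap 0 ep0 := O1
  have e2 : face (oneC (n := 0) 2) 0 ep0 = face (oneC 1) 0 ep0 := O2
  have e3 : face (oneC (n := 0) 1) 0 ep1 = faceMap 0 ep1 := O3
  have e4 : face (oneC (n := 0) 0) 0 ep1 = face (oneC 2) 0 ep1 := O4
  rw [e1, e2, e3, e4, fC, fC]
  abel

lemma app_fC {p q : ℕ} (θ : Kmod R (Cube p) q) (i : Fin 2) :
    app θ (fC i p) = mapK (faceMap 0 (vertexVal 1 i)) θ := by
  rw [fC, app_single, one_smul]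

lemma C4rest (k : ℕ) :
    ((∑ j : Fin (k + 1), ∑ i : Fin 2, ((-1 : R) ^ ((j : ℕ) + 1) * ![a, b] i)
        • Finsupp.single (face (oneC (n := k + 1) 0) j.succ (vertexVal 1 i)) (1 : R))
      - (∑ j : Fin (k + 1), ∑ i : Fin 2, ((-1 : R) ^ ((j : ℕ) + 1) * ![a, b] i)
        • Finsupp.single (face (oneC (n := k + 1) 2) j.succ (vertexVal 1 i)) (1 : R))
      + (∑ j : Fin (k + 1), ∑ i : Fin 2, ((-1 : R) ^ ((j : ℕ) + 1) * ![a, b] i)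
        • Finsupp.single (face (oneC (n := k + 1) 1) j.succ (vertexVal 1 i)) (1 : R)))
    = app (vC k) (brC a b (k + 1)) := by
  rw [brC, map_sum, ← Finset.sum_sub_distrib, ← Finset.sum_add_distrib]
  refine Finset.sum_congr rfl fun j _ => ?_
  rw [map_sum, ← Finset.sum_sub_distrib, ← Finset.sum_add_distrib]
  refine Finset.sum_congr rfl fun i _ => ?_
  rw [map_smul, app_single, one_smul, vC, map_add, map_sub, mapK_single, mapK_single, mapK_single]
  rw [show face (oneC (n := k + 1) 0) j.succ (vertexVal 1 i)
      = (faceMap j.succ (vertexVal 1 i)).comp (oneC 0) from O5 0 j _]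
  rw [show face (oneC (n := k + 1) 2) j.succ (vertexVal 1 i)
      = (faceMap j.succ (vertexVal 1 i)).comp (oneC 2) from O5 2 j _]
  rw [show face (oneC (n := k + 1) 1) j.succ (vertexVal 1 i)
      = (faceMap j.succ (vertexVal 1 i)).comp (oneC 1) from O5 1 j _]
  rw [smul_add, smul_sub]

/-- C4b : boundary of the first-coordinate-subdivision chain -/
lemma C4b (k : ℕ) : bdry R ![a, b] (Cube (k + 2)) (k + 1) (vC (k + 1))
    = a • fC 0 (k + 1) + b • fC 1 (k + 1) + app (vC k) (brC a b (k + 1)) := by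
  rw [vC, map_add, map_sub, bdry_single_split, bdry_single_split, bdry_single_split]
  have e1 : face (oneC (n := k + 1) 0) 0 ep0 = faceMap 0 ep0 := O1
  have e2 : face (oneC (n := k + 1) 2) 0 ep0 = face (oneC 1) 0 ep0 := O2
  have e3 : face (oneC (n := k + 1) 1) 0 ep1 = faceMap 0 ep1 := O3
  have e4 : face (oneC (n := k + 1) 0) 0 ep1 = face (oneC 2) 0 ep1 := O4
  rw [e1, e2, e3, e4, fC, fC, ← C4rest a b k]
  abel


lemma bdry_single_split1 (T : C(Cube 2, X)) :
    bdry R ![a, b] X 1 (Finsupp.single T (1 : R))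
      = a • Finsupp.single (face T 0 ep0) (1 : R) + b • Finsupp.single (face T 0 ep1) (1 : R)
        - a • Finsupp.single (face T (Fin.succ 0) ep0) (1 : R)
        - b • Finsupp.single (face T (Fin.succ 0) ep1) (1 : R) := by
  rw [bdry_single, one_smul, Fin.sum_univ_succ, Fin.sum_univ_two, Fin.sum_univ_one,
    Fin.sum_univ_two]
  simp only [Fin.val_zero, pow_zero, one_mul, wv0, wv1, Fin.val_succ, pow_one]
  module

lemma bdry_single_split2 (k : ℕ) (T : C(Cube (k + 3), X)) :
    bdry R ![a, b] X (k + 2) (Finsupp.single T (1 : R))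
      = a • Finsupp.single (face T 0 ep0) (1 : R) + b • Finsupp.single (face T 0 ep1) (1 : R)
        - a • Finsupp.single (face T (Fin.succ 0) ep0) (1 : R)
        - b • Finsupp.single (face T (Fin.succ 0) ep1) (1 : R)
        + ∑ j : Fin (k + 1), ∑ i : Fin 2,
            ((-1 : R) ^ ((j : ℕ) + 1 + 1) * ![a, b] i)
              • Finsupp.single (face T j.succ.succ (vertexVal 1 i)) (1 : R) := by
  rw [bdry_single, one_smul, Fin.sum_univ_succ, Fin.sum_univ_two, Fin.sum_univ_succ,
    Fin.sum_univ_two]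
  simp only [Fin.val_zero, pow_zero, one_mul, wv0, wv1, Fin.val_succ, pow_one]
  module

/-- the lower-order rest term in the boundary of the homotopy chain -/
def hRest : (n : ℕ) → Kmod R (Cube (n + 1)) (n + 1)
  | 0 => 0
  | (k + 1) => app (hC k) (brC a b (k + 1))

/-- C3a : boundary of the homotopy chain, base case -/
lemma C3a : bdry R ![a, b] (Cube 1) 1 (hC 0)
    = -(a • vC 0) - b • iota 1
      + a • Finsupp.single ((faceMap 0 ep0 : C(Cube 0, Cube 1)).comp pi0) (1 : R)
      + b • Finsupp.single ((faceMap 0 ep1 : C(Cube 0, Cube 1)).comp pi0) (1 : R) := by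
  rw [hC, map_sub, bdry_single_split1, bdry_single_split1]
  have e1 : face (Psi2 (n := 0)) 0 ep0 = oneC 2 := H3
  have e2 : face (Psi2 (n := 0)) 0 ep1 = (faceMap 0 ep1).comp pi0 := H4
  have e3 : face (Psi2 (n := 0)) (Fin.succ 0) ep0 = oneC 1 := H7
  have e4 : face (Psi2 (n := 0)) (Fin.succ 0) ep1 = Dmap := H8
  have e5 : face (Psi1 (n := 0)) 0 ep0 = oneC 0 := H1
  have e6 : face (Psi1 (n := 0)) 0 ep1 = ContinuousMap.id _ := H2
  have e7 : face (Psi1 (n := 0)) (Fin.succ 0) ep0 = (faceMap 0 ep0).comp pi0 := H5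
  have e8 : face (Psi1 (n := 0)) (Fin.succ 0) ep1 = Dmap := H6
  rw [e1, e2, e3, e4, e5, e6, e7, e8, vC, iota]
  module

lemma C3rest (k : ℕ) :
    app (hC k) (brC a b (k + 1))
      = (∑ j : Fin (k + 1), ∑ i : Fin 2, ((-1 : R) ^ ((j : ℕ) + 1 + 1) * ![a, b] i)
          • Finsupp.single (face (Psi1 (n := k + 1)) j.succ.succ (vertexVal 1 i)) (1 : R))
        - (∑ j : Fin (k + 1), ∑ i : Fin 2, ((-1 : R) ^ ((j : ℕ) + 1 + 1) * ![a, b] i)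
          • Finsupp.single (face (Psi2 (n := k + 1)) j.succ.succ (vertexVal 1 i)) (1 : R)) := by
  rw [brC, map_sum, ← Finset.sum_sub_distrib]
  refine Finset.sum_congr rfl fun j _ => ?_
  rw [map_sum, ← Finset.sum_sub_distrib]
  refine Finset.sum_congr rfl fun i _ => ?_
  rw [map_smul, app_single, one_smul, hC, map_sub, mapK_single, mapK_single]
  rw [show face (Psi2 (n := k + 1)) j.succ.succ (vertexVal 1 i)
      = (faceMap j.succ (vertexVal 1 i)).comp (Psi2 (n := k)) from H9b j _]
  rw [show face (Psi1 (n := k + 1)) j.succ.succ (vertexVal 1 i)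
      = (faceMap j.succ (vertexVal 1 i)).comp (Psi1 (n := k)) from H9a j _]
  module

/-- C3b : boundary of the homotopy chain -/
lemma C3b (k : ℕ) : bdry R ![a, b] (Cube (k + 2)) (k + 2) (hC (k + 1))
    = -(a • vC (k + 1)) - b • iota (k + 2)
      + a • Finsupp.single ((faceMap 0 ep0 : C(Cube (k + 1), Cube (k + 2))).comp pi0) (1 : R)
      + b • Finsupp.single ((faceMap 0 ep1 : C(Cube (k + 1), Cube (k + 2))).comp pi0) (1 : R)
      - app (hC k) (brC a b (k + 1)) := by
  rw [hC, map_sub, bdry_single_split2, bdry_single_split2]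
  have e1 : face (Psi2 (n := k + 1)) 0 ep0 = oneC 2 := H3
  have e2 : face (Psi2 (n := k + 1)) 0 ep1 = (faceMap 0 ep1).comp pi0 := H4
  have e3 : face (Psi2 (n := k + 1)) (Fin.succ 0) ep0 = oneC 1 := H7
  have e4 : face (Psi2 (n := k + 1)) (Fin.succ 0) ep1 = Dmap := H8
  have e5 : face (Psi1 (n := k + 1)) 0 ep0 = oneC 0 := H1
  have e6 : face (Psi1 (n := k + 1)) 0 ep1 = ContinuousMap.id _ := H2
  have e7 : face (Psi1 (n := k + 1)) (Fin.succ 0) ep0 = (faceMap 0 ep0).comp pi0 := H5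
  have e8 : face (Psi1 (n := k + 1)) (Fin.succ 0) ep1 = Dmap := H6
  rw [e1, e2, e3, e4, e5, e6, e7, e8, C3rest a b k, vC, iota]
  module

/-- C3u : boundary of the homotopy chain, uniform version -/
lemma C3u (n : ℕ) : bdry R ![a, b] (Cube (n + 1)) (n + 1) (hC n)
    = -(a • vC n) - b • iota (n + 1)
      + a • Finsupp.single ((faceMap 0 ep0 : C(Cube n, Cube (n + 1))).comp pi0) (1 : R)
      + b • Finsupp.single ((faceMap 0 ep1 : C(Cube n, Cube (n + 1))).comp pi0) (1 : R)
      - hRest a b n := by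
  cases n with
  | zero => rw [show hRest a b 0 = 0 from rfl, sub_zero]; exact C3a a b
  | succ k => exact C3b a b k


lemma C5one {p q : ℕ} (g : C(Cube (q + 1), Cube p)) :
    bdry R ![a, b] (Cube (p + 1)) (q + 1) (Finsupp.single (prodL g) (1 : R))
      = a • Finsupp.single ((faceMap 0 ep0).comp g) (1 : R)
        + b • Finsupp.single ((faceMap 0 ep1).comp g) (1 : R)
        - tens (bdry R ![a, b] (Cube p) q (Finsupp.single g (1 : R))) := by
  rw [bdry_single, one_smul, Fin.sum_univ_succ, Fin.sum_univ_two]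
  simp only [Fin.val_zero, pow_zero, one_mul, wv0, wv1]
  rw [show face (prodL g) 0 ep0 = (faceMap 0 ep0).comp g from Pa g ep0,
    show face (prodL g) 0 ep1 = (faceMap 0 ep1).comp g from Pa g ep1]
  rw [bdry_single, one_smul, map_sum, sub_eq_add_neg, ← Finset.sum_neg_distrib]
  congr 1
  refine Finset.sum_congr rfl fun j _ => ?_
  rw [map_sum, ← Finset.sum_neg_distrib]
  refine Finset.sum_congr rfl fun i _ => ?_
  rw [map_smul, tens_single,
    show face (prodL g) j.succ (vertexVal 1 i) = prodL (face g j (vertexVal 1 i)) from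
      Pb g j (vertexVal 1 i), Fin.val_succ]
  module

lemma C5 {p q : ℕ} (θ : Kmod R (Cube p) (q + 1)) :
    bdry R ![a, b] (Cube (p + 1)) (q + 1) (tens θ)
      = a • mapK (faceMap 0 ep0) θ + b • mapK (faceMap 0 ep1) θ
        - tens (bdry R ![a, b] (Cube p) q θ) := by
  induction θ using Finsupp.induction_linear with
  | zero => simp
  | add c d hc hd =>
      simp only [map_add, hc, hd]
      module
  | single g r =>
      have hr : (Finsupp.single g r : Kmod R (Cube p) (q + 1)) = r • Finsupp.single g 1 := by
        rw [Finsupp.smul_single, smul_eq_mul, mul_one]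
      rw [hr, map_smul, map_smul, map_smul, map_smul, map_smul, map_smul, tens_single, C5one,
        mapK_single, mapK_single]
      module

lemma C6 {p q : ℕ} (θ : Kmod R (Cube p) q) :
    tens (app θ (bdC a b p)) = - app (tens θ) (brC a b (p + 1)) := by
  induction θ using Finsupp.induction_linear with
  | zero => simp [app_zero_chain]
  | add c d hc hd =>
      rw [app_add_chain, map_add, hc, hd, map_add, app_add_chain]
      module
  | single g r =>
      rw [bdC, iota, bdry_single, one_smul, map_sum, map_sum, brC, map_sum,
        ← Finset.sum_neg_distrib]
      refine Finset.sum_congr rfl fun j _ => ?_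
      rw [map_sum, map_sum, map_sum, ← Finset.sum_neg_distrib]
      refine Finset.sum_congr rfl fun i _ => ?_
      simp only [map_smul, app_single, one_smul, mapK_single, tens_single, face_id]
      rw [show prodL ((faceMap j (vertexVal 1 i)).comp g)
          = (faceMap j.succ (vertexVal 1 i)).comp (prodL g) from by rw [Pc, Pe]]
      module

lemma F_tens {m q : ℕ} (i : Fin 2) (θ : Kmod R (Cube m) q) :
    app (fC i q) (tens θ) = mapK (faceMap 0 (vertexVal 1 i)) θ := by
  induction θ using Finsupp.induction_linear with
  | zero => simp
  | add c d hc hd => simp [map_add, hc, hd]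
  | single g r =>
      rw [tens_single, app_single, fC, mapK_single, mapK_single, Finsupp.smul_single,
        smul_eq_mul, mul_one, Pa]

lemma DDfC (n : ℕ) (i : Fin 2) :
    app (ddC n) (fC i n)
      = Finsupp.single ((faceMap 0 (vertexVal 1 i) : C(Cube n, Cube (n + 1))).comp pi0)
          (1 : R) := by
  rw [fC, app_single, one_smul, ddC, mapK_single]

lemma tens_iota (n : ℕ) : tens (iota n (R := R)) = iota (n + 1) := by
  rw [iota, tens_single, Pd, iota]

lemma scm0 (z : Fin 0 → Fin 3) : subCubeMap z = ContinuousMap.id (Cube 0) := by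
  refine ContinuousMap.ext fun x => ?_
  funext i
  exact i.elim0

lemma sdC0 : sdC 0 = -(iota 0 (R := R)) := by
  rw [sdC, iota, SD_single, one_smul, Fintype.sum_unique, ContinuousMap.id_comp, scm0]
  simp [iota]

lemma eC0 : eC 0 = -(iota 1 (R := R)) := by
  rw [eC, sdC0, map_neg, tens_iota]

lemma evV0 : evV 0 = 1 := rfl
lemma evV1 : evV 1 = 1 := rfl
lemma evV2 : evV 2 = -1 := rfl

/-- C7 : recursive structure of the subdivision chain -/
lemma C7 (m : ℕ) : sdC (m + 1) = app (vC m) (eC m (R := R)) := by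
  have hR : app (vC m) (eC m (R := R)) = ∑ z : Fin m → Fin 3,
      ((-(∏ i, evV (z i)) : ℤ) : R) •
        (Finsupp.single (subCubeMap (Fin.cons 0 z)) (1 : R)
          - Finsupp.single (subCubeMap (Fin.cons 2 z)) (1 : R)
          + Finsupp.single (subCubeMap (Fin.cons 1 z)) (1 : R)) := by
    rw [eC, sdC, iota, SD_single, one_smul]
    simp only [ContinuousMap.id_comp]
    rw [map_sum, map_sum]
    refine Finset.sum_congr rfl fun z _ => ?_
    rw [map_smul, map_smul, tens_single, app_single, one_smul, vC, map_add, map_sub,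
      mapK_single, mapK_single, mapK_single, Sa, Sa, Sa]
  rw [hR, sdC, iota, SD_single, one_smul]
  simp only [ContinuousMap.id_comp]
  rw [← (Fin.consEquiv fun _ : Fin (m + 1) => Fin 3).sum_comp
      (fun z => ((-(∏ i, evV (z i)) : ℤ) : R) • Finsupp.single (subCubeMap z) (1 : R)),
    Fintype.sum_prod_type]
  have hcons : ∀ (p : Fin 3) (w : Fin m → Fin 3),
      (Fin.consEquiv fun _ : Fin (m + 1) => Fin 3) (p, w) = Fin.cons p w := fun _ _ => rfl
  simp only [hcons]
  rw [Fin.sum_univ_three]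
  have h0 : ∀ z : Fin m → Fin 3,
      ((-(∏ i, evV ((Fin.cons (0 : Fin 3) z : Fin (m + 1) → Fin 3) i)) : ℤ) : R)
      = ((-(∏ i, evV (z i)) : ℤ) : R) := fun z => by
    rw [Fin.prod_univ_succ]
    simp only [Fin.cons_zero, Fin.cons_succ, evV0, one_mul]
  have h1 : ∀ z : Fin m → Fin 3,
      ((-(∏ i, evV ((Fin.cons (1 : Fin 3) z : Fin (m + 1) → Fin 3) i)) : ℤ) : R)
      = ((-(∏ i, evV (z i)) : ℤ) : R) := fun z => by
    rw [Fin.prod_univ_succ]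
    simp only [Fin.cons_zero, Fin.cons_succ, evV1, one_mul]
  have h2 : ∀ z : Fin m → Fin 3,
      ((-(∏ i, evV ((Fin.cons (2 : Fin 3) z : Fin (m + 1) → Fin 3) i)) : ℤ) : R)
      = -((-(∏ i, evV (z i)) : ℤ) : R) := fun z => by
    rw [Fin.prod_univ_succ]
    simp only [Fin.cons_zero, Fin.cons_succ, evV2]
    push_cast
    ring
  simp only [h0, h1, h2]
  rw [← Finset.sum_add_distrib, ← Finset.sum_add_distrib]
  refine Finset.sum_congr rfl fun z _ => ?_
  module

/-- the inductive step auxiliary: `Bres (EE ι) = EE' (Bres ι)` -/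
lemma LEres_aux (k : ℕ)
    (ih : bdry R ![a, b] (Cube (k + 1)) k (sdC (k + 1)) = app (sdC k) (bdC a b k)) :
    app (brC a b (k + 1)) (eC (k + 1)) = app (eC k) (brC a b (k + 1)) := by
  have hbr : brC a b (k + 1) = bdC a b (k + 1) - a • fC 0 (k + 1) - b • fC 1 (k + 1) := by
    rw [C1]; abel
  have hbd : bdry R ![a, b] (Cube (k + 2)) (k + 1) (eC (k + 1))
      = a • mapK (faceMap 0 ep0) (sdC (k + 1)) + b • mapK (faceMap 0 ep1) (sdC (k + 1))
        + app (eC k) (brC a b (k + 1)) := by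
    rw [show eC (k + 1) = tens (sdC (k + 1) (R := R)) from rfl, C5, ih, C6]
    abel
  conv_lhs => rw [hbr]
  rw [app_sub_chain, app_sub_chain, app_smul_chain, app_smul_chain, ← bdry_eq_app, hbd,
    show eC (k + 1) = tens (sdC (k + 1) (R := R)) from rfl, F_tens, F_tens,
    vv0', vv1']
  abel

/-- CM : the subdivision is a chain map (universal form) -/
lemma CMc : ∀ m, bdry R ![a, b] (Cube (m + 1)) m (sdC (m + 1)) = app (sdC m) (bdC a b m) := by
  intro m
  induction m with
  | zero =>
      rw [C7, bdry_app, C4a, C1, brC_zero, add_zero]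
      rw [app_add_chain, app_smul_chain, app_smul_chain,
        show eC 0 = tens (sdC 0 (R := R)) from rfl, F_tens, F_tens,
        map_add, map_smul, map_smul, app_fC, app_fC, vv0', vv1']
  | succ k ih =>
      have lr := LEres_aux a b k ih
      rw [C7, bdry_app, C4b, app_add_chain, app_add_chain, app_smul_chain, app_smul_chain,
        ← app_app, lr, app_app, ← C7]
      rw [show eC (k + 1) = tens (sdC (k + 1) (R := R)) from rfl, F_tens, F_tens]
      rw [C1, map_add, map_add, map_smul, map_smul, app_fC, app_fC, vv0', vv1']

/-- LEres, standalone -/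
lemma LEresC (k : ℕ) :
    app (brC a b (k + 1)) (eC (k + 1)) = app (eC k) (brC a b (k + 1)) :=
  LEres_aux a b k (CMc a b k)


end Ops

/-- The universal homotopy chain. -/
def thC : (n : ℕ) → Kmod R (Cube n) (n + 1)
  | 0 => -(ddC 0)
  | (n + 1) => app (hC n) (eC n) + app (ddC (n + 1)) (sdC (n + 1)) - tens (thC n)

section Ops2

variable (a b : R)

/-- The lower-order correction term. -/
def thL : (n : ℕ) → Kmod R (Cube n) n
  | 0 => 0
  | (n + 1) => app (thC n) (bdC a b n)

lemma ep0_eq : (ep0 : unitInterval) = vertexVal 1 (0 : Fin 2) := rfl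
lemma ep1_eq : (ep1 : unitInterval) = vertexVal 1 (1 : Fin 2) := rfl

/-- KEY : structure of `thC` applied to the rest of the boundary chain -/
lemma KEY (n : ℕ) : app (thC n) (brC a b n)
    = app (hRest a b n) (eC n) + app (ddC n) (app (sdC n) (brC a b n)) + tens (thL a b n) := by
  cases n with
  | zero =>
      rw [brC_zero, map_zero, map_zero, map_zero,
        show hRest a b 0 = 0 from rfl, app_zero_chain, show thL a b 0 = 0 from rfl, map_zero]
      simp
  | succ k =>
      rw [show thC (k + 1)
          = app (hC k) (eC k) + app (ddC (k + 1)) (sdC (k + 1)) - tens (thC k) from rfl]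
      rw [app_sub_chain, app_add_chain]
      rw [show hRest a b (k + 1) = app (hC k) (brC a b (k + 1)) from rfl,
        show thL a b (k + 1) = app (thC k) (bdC a b k) from rfl, C6]
      rw [← app_app, ← app_app, ← app_app, ← LEresC]
      abel

/-- MUI : the master universal identity -/
lemma MUI : ∀ n, bdry R ![a, b] (Cube n) n (thC n)
    = b • sdC n - a • iota n - thL a b n := by
  intro n
  induction n with
  | zero =>
      rw [show thC 0 = -(ddC 0 (R := R)) from rfl, map_neg, C2a,
        show thL a b 0 = 0 from rfl, sub_zero, sdC0]
      module
  | succ n ih =>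
      have hT1 : bdry R ![a, b] (Cube (n + 1)) (n + 1) (app (hC n) (eC n))
          = -(a • sdC (n + 1)) - b • eC n
            + a • app (ddC n) (mapK (faceMap 0 (vertexVal 1 (0 : Fin 2))) (sdC n))
            + b • app (ddC n) (mapK (faceMap 0 (vertexVal 1 (1 : Fin 2))) (sdC n))
            - app (hRest a b n) (eC n) := by
        rw [bdry_app, C3u, ep0_eq, ep1_eq]
        rw [app_sub_chain, app_add_chain, app_add_chain, app_sub_chain, app_neg_chain,
          app_smul_chain, app_smul_chain, app_smul_chain, app_smul_chain]
        rw [← C7, app_iota_left, ← DDfC, ← DDfC, ← app_app, ← app_app,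
          show eC n = tens (sdC n (R := R)) from rfl, F_tens, F_tens]
      have hT2 : bdry R ![a, b] (Cube (n + 1)) (n + 1) (app (ddC (n + 1)) (sdC (n + 1)))
          = (a + b) • sdC (n + 1) - app (ddC n) (app (sdC n) (bdC a b n)) := by
        rw [bdry_app, C2b, app_sub_chain, app_smul_chain, app_iota_left, ← app_app,
          ← bdry_eq_app, CMc]
      have hT3 : bdry R ![a, b] (Cube (n + 1)) (n + 1) (tens (thC n))
          = a • mapK (faceMap 0 (vertexVal 1 (0 : Fin 2))) (thC n)
            + b • mapK (faceMap 0 (vertexVal 1 (1 : Fin 2))) (thC n)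
            - (b • eC n - a • iota (n + 1) - tens (thL a b n)) := by
        rw [C5, ih, map_sub, map_sub, map_smul, map_smul, tens_iota, ep0_eq, ep1_eq,
          show tens (sdC n (R := R)) = eC n from rfl]
      have hRHS : thL a b (n + 1)
          = a • mapK (faceMap 0 (vertexVal 1 (0 : Fin 2))) (thC n)
            + b • mapK (faceMap 0 (vertexVal 1 (1 : Fin 2))) (thC n)
            + (app (hRest a b n) (eC n) + app (ddC n) (app (sdC n) (brC a b n))
               + tens (thL a b n)) := by
        rw [show thL a b (n + 1) = app (thC n) (bdC a b n) from rfl, C1, map_add, map_add,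
          map_smul, map_smul, app_fC, app_fC, KEY]
      have hsd : app (sdC n) (bdC a b n)
          = a • mapK (faceMap 0 (vertexVal 1 (0 : Fin 2))) (sdC n)
            + b • mapK (faceMap 0 (vertexVal 1 (1 : Fin 2))) (sdC n)
            + app (sdC n) (brC a b n) := by
        rw [C1, map_add, map_add, map_smul, map_smul, app_fC, app_fC]
      rw [show thC (n + 1)
          = app (hC n) (eC n) + app (ddC (n + 1)) (sdC (n + 1)) - tens (thC n) from rfl,
        map_sub, map_add, hT1, hT2, hT3, hRHS, hsd, map_add, map_add, map_smul, map_smul]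
      module


end Ops2

/-! ### Main lemma (half of the theorem) -/

lemma thL_app (a b : R) {n : ℕ} (u : Kmod R X n)
    (hu : u ∈ cyclesMod R ![a, b] X n) : app (thL a b n) u = 0 := by
  cases n with
  | zero => rw [show thL a b 0 = 0 from rfl, app_zero_chain]
  | succ k =>
      have hu' : bdry R ![a, b] X k u = 0 := hu
      rw [show thL a b (k + 1) = app (thC k) (bdC a b k) from rfl, ← app_app,
        ← bdry_eq_app, hu', map_zero]

lemma main2 (a b : R) (n : ℕ) (u : Kmod R X n) (hu : u ∈ cyclesMod R ![a, b] X n) :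
    b • SD R X n u - a • u ∈ LinearMap.range (bdry R ![a, b] X n) := by
  refine ⟨app (thC n) u, ?_⟩
  rw [bdry_app, MUI, app_sub_chain, app_sub_chain, app_smul_chain, app_smul_chain,
    ← SD_eq_app, app_iota_left, thL_app a b u hu, sub_zero]

/-! ### Reflection -/

/-- Reflection of the cube in all coordinates. -/
def reflMap {n : ℕ} : C(Cube n, Cube n) :=
  ⟨fun x i => unitInterval.symm (x i),
    continuous_pi fun i => unitInterval.continuous_symm.comp (continuous_apply i)⟩

lemma Ra {m : ℕ} (j : Fin (m + 1)) (c : unitInterval) :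
    (reflMap (n := m + 1)).comp (faceMap j c)
      = (faceMap j (unitInterval.symm c)).comp (reflMap (n := m)) := by
  refine ContinuousMap.ext fun x => ?_
  funext i
  show unitInterval.symm ((Fin.insertNth j c x : Cube (m + 1)) i)
      = (Fin.insertNth j (unitInterval.symm c) (reflMap x) : Cube (m + 1)) i
  induction i using Fin.succAboveCases (i := j) with
  | x => rw [Fin.insertNth_apply_same, Fin.insertNth_apply_same]
  | p l =>
      rw [Fin.insertNth_apply_succAbove, Fin.insertNth_apply_succAbove]
      rfl

lemma Rc {m : ℕ} : (reflMap (n := m)).comp reflMap = ContinuousMap.id _ := by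
  refine ContinuousMap.ext fun x => ?_
  funext i
  exact unitInterval.symm_symm (x i)

lemma symm_projIcc (t : ℝ) :
    unitInterval.symm (Set.projIcc 0 1 zero_le_one t)
      = Set.projIcc 0 1 zero_le_one (1 - t) := by
  apply Subtype.ext
  rw [unitInterval.coe_symm_eq]
  show 1 - max 0 (min 1 t) = max 0 (min 1 (1 - t))
  rcases le_total t 0 with h | h
  · rw [min_eq_right (h.trans zero_le_one), max_eq_left h, min_eq_left (by linarith),
      max_eq_right zero_le_one]
    norm_num
  · rcases le_total 1 t with h1 | h1
    · rw [min_eq_left h1, max_eq_right zero_le_one, min_eq_right (by linarith),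
        max_eq_left (by linarith)]
      norm_num
    · rw [min_eq_right h1, max_eq_right h, min_eq_right (by linarith),
        max_eq_right (by linarith)]

/-- swap of the subdivision patterns `λ ↔ ρ` -/
def swapE : Fin 3 ≃ Fin 3 := Equiv.swap 0 1

lemma evV_swap (p : Fin 3) : evV (swapE p) = evV p := by revert p; decide

lemma Rb {m : ℕ} (z : Fin m → Fin 3) :
    (reflMap (n := m)).comp (subCubeMap z)
      = (subCubeMap (swapE ∘ z)).comp reflMap := by
  refine ContinuousMap.ext fun x => ?_
  funext i
  show unitInterval.symm (Set.projIcc (0 : ℝ) 1 zero_le_one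
      (((evE (z i) : ℝ) + (evV (z i) : ℝ) * (x i : ℝ)) / 3))
    = Set.projIcc (0 : ℝ) 1 zero_le_one
      (((evE (swapE (z i)) : ℝ) + (evV (swapE (z i)) : ℝ) * ((unitInterval.symm (x i) : ℝ))) / 3)
  rw [symm_projIcc, unitInterval.coe_symm_eq]
  refine congrArg _ ?_
  generalize z i = p
  fin_cases p
  · show 1 - (((evE 0 : ℝ)) + (evV 0 : ℝ) * _) / 3 = ((evE (swapE 0) : ℝ) + (evV (swapE 0) : ℝ) * _) / 3
    rw [show swapE 0 = 1 from rfl]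
    simp [evE, evV]
    ring
  · show 1 - (((evE 1 : ℝ)) + (evV 1 : ℝ) * _) / 3 = ((evE (swapE 1) : ℝ) + (evV (swapE 1) : ℝ) * _) / 3
    rw [show swapE 1 = 0 from rfl]
    simp [evE, evV]
    ring
  · show 1 - (((evE 2 : ℝ)) + (evV 2 : ℝ) * _) / 3 = ((evE (swapE 2) : ℝ) + (evV (swapE 2) : ℝ) * _) / 3
    rw [show swapE 2 = 2 from rfl]
    simp [evE, evV]
    ring

/-- the reflection operator on chains -/
def RF (m : ℕ) : Kmod R X m →ₗ[R] Kmod R X m :=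
  app (Finsupp.single reflMap (1 : R))

lemma RF_single {m : ℕ} (T : C(Cube m, X)) (r : R) :
    RF m (Finsupp.single T r) = Finsupp.single (T.comp reflMap) r := by
  rw [RF, app_single, mapK_single, Finsupp.smul_single, smul_eq_mul, mul_one]

lemma RF_RF {m : ℕ} (u : Kmod R X m) : RF m (RF m u) = u := by
  induction u using Finsupp.induction_linear with
  | zero => simp
  | add c d hc hd => simp [hc, hd]
  | single T r => rw [RF_single, RF_single, ContinuousMap.comp_assoc, Rc,
      ContinuousMap.comp_id]

lemma symm_vv0 : unitInterval.symm (vertexVal 1 (0 : Fin 2)) = vertexVal 1 (1 : Fin 2) := by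
  apply Subtype.ext
  rw [unitInterval.coe_symm_eq, ← ep0_eq, ← ep1_eq, vv0, vv1]
  norm_num

lemma symm_vv1 : unitInterval.symm (vertexVal 1 (1 : Fin 2)) = vertexVal 1 (0 : Fin 2) := by
  apply Subtype.ext
  rw [unitInterval.coe_symm_eq, ← ep0_eq, ← ep1_eq, vv0, vv1]
  norm_num

lemma face_refl {m : ℕ} (T : C(Cube (m + 1), X)) (j : Fin (m + 1)) (c : unitInterval) :
    face (T.comp reflMap) j c = (face T j (unitInterval.symm c)).comp reflMap := by
  rw [face, face, ContinuousMap.comp_assoc, Ra, ← ContinuousMap.comp_assoc]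

lemma R1 (a b : R) (n : ℕ) (u : Kmod R X (n + 1)) :
    bdry R ![a, b] X n (RF (n + 1) u) = RF n (bdry R ![b, a] X n u) := by
  induction u using Finsupp.induction_linear with
  | zero => simp
  | add c d hc hd => simp [hc, hd]
  | single T r =>
      rw [RF_single, bdry_single, bdry_single, map_smul, map_sum]
      congr 1
      refine Finset.sum_congr rfl fun j _ => ?_
      rw [map_sum, Fin.sum_univ_two, Fin.sum_univ_two, map_smul, map_smul, RF_single, RF_single,
        face_refl, face_refl, symm_vv0, symm_vv1]
      rw [show (![a, b] : Fin 2 → R) 0 = a from rfl, show (![a, b] : Fin 2 → R) 1 = b from rfl,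
        show (![b, a] : Fin 2 → R) 0 = b from rfl, show (![b, a] : Fin 2 → R) 1 = a from rfl]
      abel

lemma R2 (n : ℕ) (u : Kmod R X n) : SD R X n (RF n u) = RF n (SD R X n u) := by
  induction u using Finsupp.induction_linear with
  | zero => simp
  | add c d hc hd => simp [hc, hd]
  | single T r =>
      rw [RF_single, SD_single, SD_single, map_smul, map_sum]
      congr 1
      have eqv : (Fin n → Fin 3) ≃ (Fin n → Fin 3) :=
        Equiv.arrowCongr (Equiv.refl _) swapE
      refine Fintype.sum_equiv (Equiv.arrowCongr (Equiv.refl (Fin n)) swapE) _ _ fun z => ?_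
      rw [map_smul, RF_single]
      have hco : ((-(∏ i, evV (z i)) : ℤ) : R)
          = ((-(∏ i, evV (((Equiv.arrowCongr (Equiv.refl (Fin n)) swapE) z) i)) : ℤ) : R) := by
        congr 2
        exact (Finset.prod_congr rfl fun i _ => (evV_swap (z i)).symm)
      rw [← hco]
      congr 1
      rw [ContinuousMap.comp_assoc, Rb, ← ContinuousMap.comp_assoc]
      rfl

end SDAux













/-- On the level of homology classes (equality of classes being
membership of the difference in the boundaries), `[a·SD_n(u)] = [b·u]` and
`[b·SD_n(u)] = [a·u]` for every cycle `u`. -/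
theorem SD_homology_classes (R : Type) [CommRing R] (a b : R) (X : Type)
    [TopologicalSpace X] (n : ℕ) (u : Kmod R X n) (hu : u ∈ cyclesMod R ![a, b] X n) :
    a • SD R X n u - b • u ∈ LinearMap.range (bdry R ![a, b] X n) ∧
    b • SD R X n u - a • u ∈ LinearMap.range (bdry R ![a, b] X n) := by
  constructor
  · -- first claim via reflection
    have hu' : SDAux.RF n u ∈ cyclesMod R ![b, a] X n := by
      cases n with
      | zero => trivial
      | succ k =>
          have h0 : bdry R ![a, b] X k u = 0 := hu
          show bdry R ![b, a] X k (SDAux.RF (k + 1) u) = 0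
          rw [SDAux.R1 b a k u, h0, map_zero]
    obtain ⟨c, hc⟩ := SDAux.main2 b a n (SDAux.RF n u) hu'
    refine ⟨SDAux.RF (n + 1) c, ?_⟩
    have := congrArg (SDAux.RF n) hc
    rw [map_sub, map_smul, map_smul, ← SDAux.R2, SDAux.RF_RF] at this
    rw [← this, SDAux.R1 a b n c]
  · exact SDAux.main2 a b n u hu
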